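/- arXiv:2112.03139 — 3 statements merged into one kernel-verified Lean document; each statement's English description precedes it below -/
import Mathlib

section
/- For positive constants α, β, γ, r, the function f(x) = αx / (β(r+x) + γ(r+x)²) satisfies the scalability (extendibility) property: for every c > 1 and x > 0, c·f(x) − f(c·x) > 0. -/
theorem stmt_3 (α β γ r : ℝ) (hα : 0 < α) (hβ : 0 < β) (hγ : 0 < γ) (hr : 0 < r)
    (f : ℝ → ℝ) (hf : ∀ x, f x = α * x / (β * (r + x) + γ * (r + x)^2)) :
    ∀ c > (1:ℝ), ∀ x > (0:ℝ), 0 < c * f x - f (c * x) := by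
  intro c hc x hx
  rw [hf, hf]
  have hcx : 0 < c * x := mul_pos (lt_trans one_pos hc) hx
  have hxcx : x < c * x := by nlinarith
  have hD1 : 0 < β * (r + x) + γ * (r + x)^2 := by positivity
  have hD2 : 0 < β * (r + c * x) + γ * (r + c * x)^2 := by
    nlinarith [mul_pos hβ (by linarith : (0:ℝ) < r + c * x), mul_nonneg hγ.le (sq_nonneg (r + c * x))]
  have hlt : β * (r + x) + γ * (r + x)^2 < β * (r + c * x) + γ * (r + c * x)^2 := by
    nlinarith [mul_pos hβ (sub_pos.2 hxcx), mul_pos hγ (mul_pos (sub_pos.2 hxcx) (by linarith : (0:ℝ) < 2*r + x + c*x))]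
  have hnum : 0 < α * (c * x) := mul_pos hα hcx
  have := div_lt_div_of_pos_left hnum hD1 hlt
  have hrw : c * (α * x / (β * (r + x) + γ * (r + x)^2))
      = α * (c * x) / (β * (r + x) + γ * (r + x)^2) := by ring
  linarith [hrw ▸ this]
end

section
/- Under the loosely coupled model p₀ = P·ω²·e²·I₀²·x / (R·(r+x)²·d₀⁶) with d₀ uniformly distributed in distance-squared over [0, ρ], the outage probability P[p₀ < τ] equals 0 if and only if P ≥ ρ⁶·τ·R·(r+x)² / (ω²·e²·I₀²·x). -/
open Real

theorem stmt_9 (P ω e I₀ x R r τ ρ : ℝ)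
    (hP : 0 < P) (hω : 0 < ω) (he : 0 < e) (hI : 0 < I₀) (hx : 0 < x)
    (hR : 0 < R) (hr : 0 < r) (hτ : 0 < τ) (hρ : 0 < ρ) :
    (∫ v in (0:ℝ)..ρ,
        if P * ω^2 * e^2 * I₀^2 * x / (R * (r + x)^2 * v^6) < τ then 2 * v / ρ^2 else 0) = 0
      ↔ ρ^6 * τ * R * (r + x)^2 / (ω^2 * e^2 * I₀^2 * x) ≤ P := by
  have hrx : (0:ℝ) < r + x := by linarith
  set N := P * ω^2 * e^2 * I₀^2 * x with hN
  set D := R * (r + x)^2 with hD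
  have hNpos : 0 < N := by positivity
  have hDpos : 0 < D := by positivity
  set K := N / (τ * D) with hK
  have hKpos : 0 < K := by positivity
  set c := K ^ ((6:ℝ)⁻¹) with hc
  have hcpos : 0 < c := Real.rpow_pos_of_pos hKpos _
  have hc6 : c ^ 6 = K := by
    rw [hc, ← Real.rpow_natCast (K ^ ((6:ℝ)⁻¹)) 6, ← Real.rpow_mul hKpos.le]
    norm_num
  have hcond : ∀ v : ℝ, 0 < v → (N / (D * v^6) < τ ↔ c < v) := by
    intro v hv
    rw [div_lt_iff₀ (by positivity)]
    constructor
    · intro h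
      have h6 : c ^ 6 < v ^ 6 := by
        rw [hc6, hK, div_lt_iff₀ (by positivity)]; nlinarith
      exact lt_of_pow_lt_pow_left₀ 6 hv.le h6
    · intro h
      have h6 : c ^ 6 < v ^ 6 := pow_lt_pow_left₀ h hcpos.le (by norm_num)
      rw [hc6, hK, div_lt_iff₀ (by positivity)] at h6
      nlinarith
  have hiff2 : (ρ^6 * τ * R * (r + x)^2 / (ω^2 * e^2 * I₀^2 * x) ≤ P) ↔ ρ ≤ c := by
    rw [div_le_iff₀ (by positivity)]
    constructor
    · intro h
      have h6 : ρ ^ 6 ≤ c ^ 6 := by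
        rw [hc6, hK, le_div_iff₀ (by positivity)]
        rw [hN]; nlinarith [h]
      exact le_of_pow_le_pow_left₀ (by norm_num) hcpos.le h6
    · intro h
      have h6 : ρ ^ 6 ≤ c ^ 6 := pow_le_pow_left₀ hρ.le h 6
      rw [hc6, hK, le_div_iff₀ (by positivity)] at h6
      rw [hN] at h6; nlinarith [h6]
  rw [hiff2]
  constructor
  · -- forward: integral = 0 → ρ ≤ c
    intro h
    by_contra hlt
    push_neg at hlt   -- c < ρ
    -- f = g on [0, ρ]
    set g : ℝ → ℝ := fun v => if c < v then 2 * v / ρ^2 else 0 with hg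
    have hfg : Set.EqOn (fun v => if P * ω^2 * e^2 * I₀^2 * x / (R * (r + x)^2 * v^6) < τ then 2 * v / ρ^2 else 0) g (Set.uIcc 0 ρ) := by
      intro v hv
      rcases (Set.uIcc_of_le hρ.le ▸ hv : v ∈ Set.Icc 0 ρ) with ⟨hv0, hvρ⟩
      rcases eq_or_lt_of_le hv0 with h0 | h0
      · show (if N / (D * v ^ 6) < τ then 2 * v / ρ^2 else 0) = if c < v then 2 * v / ρ^2 else 0
        rw [← h0]
        norm_num [hτ, hcpos.not_gt]
      · show (if N / (D * v ^ 6) < τ then 2 * v / ρ^2 else 0) = if c < v then 2 * v / ρ^2 else 0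
        simp only [hcond v h0]
    rw [intervalIntegral.integral_congr hfg] at h
    -- g is interval integrable
    have hgind : g = Set.indicator (Set.Ioi c) (fun v => 2 * v / ρ^2) := by
      ext v; simp [g, Set.indicator_apply, Set.mem_Ioi]
    have hgint : ∀ a b : ℝ, IntervalIntegrable g MeasureTheory.volume a b := by
      intro a b
      rw [intervalIntegrable_iff, hgind]
      exact ((continuous_const.mul continuous_id |>.div_const _).integrableOn_uIoc).indicator measurableSet_Ioi
    have hsplit : (∫ v in (0:ℝ)..c, g v) + (∫ v in c..ρ, g v) = ∫ v in (0:ℝ)..ρ, g v :=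
      intervalIntegral.integral_add_adjacent_intervals (hgint 0 c) (hgint c ρ)
    have h1 : (∫ v in (0:ℝ)..c, g v) = 0 := by
      rw [intervalIntegral.integral_congr (g := fun _ => (0:ℝ))]
      · simp
      · intro v hv
        rcases (Set.uIcc_of_le hcpos.le ▸ hv : v ∈ Set.Icc 0 c) with ⟨_, hvc⟩
        simp [g, not_lt.mpr hvc]
    have h2 : (∫ v in c..ρ, g v) = (∫ v in c..ρ, 2 * v / ρ^2) := by
      apply intervalIntegral.integral_congr_ae
      filter_upwards with v hv
      rw [Set.uIoc_of_le hlt.le] at hv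
      simp [g, hv.1]
    have h3 : (∫ v in c..ρ, 2 * v / ρ^2) = (ρ^2 - c^2) / ρ^2 := by
      have : (fun v : ℝ => 2 * v / ρ^2) = fun v => (2 / ρ^2) * v := by ext v; ring
      rw [this, intervalIntegral.integral_const_mul, integral_id]
      field_simp
    have hpos : 0 < (ρ^2 - c^2) / ρ^2 := by
      apply div_pos _ (by positivity)
      nlinarith [pow_lt_pow_left₀ hlt hcpos.le (two_ne_zero)]
    rw [← hsplit, h1, h2, h3, zero_add] at h
    linarith
  · -- backward: ρ ≤ c → integral = 0
    intro h
    rw [intervalIntegral.integral_congr (g := fun _ => (0:ℝ))]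
    · simp
    · intro v hv
      rcases (Set.uIcc_of_le hρ.le ▸ hv : v ∈ Set.Icc 0 ρ) with ⟨hv0, hvρ⟩
      rcases eq_or_lt_of_le hv0 with h0 | h0
      · show (if N / (D * v ^ 6) < τ then 2 * v / ρ^2 else 0) = 0
        rw [← h0]
        norm_num [hτ]
      · show (if N / (D * v ^ 6) < τ then 2 * v / ρ^2 else 0) = 0
        rw [if_neg]
        rw [hcond v h0]
        exact not_lt.mpr (hvρ.trans h)
end

section
/- Let p₀(S) = P·ω²·M₀²·x·(r+x)^{-2} / (R + ω²(r+x)^{-1}e²(I₀²/d₀⁶ + S)) for a nonnegative real S, with all other parameters positive. Then p₀(S) < τ for all S ≥ 0 if and only if P < (τ(r+x)/x)·(R(r+x)/(ω²M₀²) + 1), where M₀ = e·I₀/d₀³. -/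
lemma stmt_10_aux (P k x s R τ : ℝ) (hk : 0 < k) (hx : 0 < x) (hs : 0 < s)
    (hτ : 0 < τ) :
    P * k * x * s⁻¹^2 < τ * (R + k * s⁻¹) ↔ P < τ * s / x * (R * s / k + 1) := by
  have h1 : P * k * x * s⁻¹^2 = P * (k * x / s^2) := by field_simp
  have h2 : τ * s / x * (R * s / k + 1) = (τ * (R + k * s⁻¹)) / (k * x / s^2) := by
    field_simp
  rw [h1, h2, lt_div_iff₀ (by positivity)]

theorem stmt_10 (P ω e I₀ d₀ x r R τ : ℝ)
    (hP : 0 < P) (hω : 0 < ω) (he : 0 < e) (hI : 0 < I₀) (hd : 0 < d₀)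
    (hx : 0 < x) (hr : 0 < r) (hR : 0 < R) (hτ : 0 < τ)
    (M₀ : ℝ) (hM : M₀ = e * I₀ / d₀^3) :
    (∀ S : ℝ, 0 ≤ S →
        P * ω^2 * M₀^2 * x * (r + x)⁻¹^2 /
          (R + ω^2 * (r + x)⁻¹ * e^2 * (I₀^2 / d₀^6 + S)) < τ)
      ↔ P < (τ * (r + x) / x) * (R * (r + x) / (ω^2 * M₀^2) + 1) := by
  have hs : 0 < r + x := by linarith
  have hM0 : 0 < M₀ := by rw [hM]; positivity
  have hk : 0 < ω^2 * M₀^2 := by positivity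
  have hcoef : 0 < ω^2 * (r + x)⁻¹ * e^2 := by positivity
  have hDpos : ∀ S : ℝ, 0 ≤ S →
      0 < R + ω^2 * (r + x)⁻¹ * e^2 * (I₀^2 / d₀^6 + S) := by
    intro S hS
    have h1 : 0 < I₀^2 / d₀^6 + S := by
      have : 0 < I₀^2 / d₀^6 := by positivity
      linarith
    nlinarith [mul_pos hcoef h1]
  have hMe : ω^2 * (r + x)⁻¹ * e^2 * (I₀^2 / d₀^6) = ω^2 * M₀^2 * (r + x)⁻¹ := by
    rw [hM]; field_simp
  have key : (P * ω^2 * M₀^2 * x * (r + x)⁻¹^2 <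
      τ * (R + ω^2 * (r + x)⁻¹ * e^2 * (I₀^2 / d₀^6 + 0)))
      ↔ P < (τ * (r + x) / x) * (R * (r + x) / (ω^2 * M₀^2) + 1) := by
    have := stmt_10_aux P (ω^2 * M₀^2) x (r + x) R τ hk hx hs hτ
    rw [add_zero, hMe]
    convert this using 2 <;> ring
  constructor
  · intro h
    rw [← key, ← div_lt_iff₀ (hDpos 0 le_rfl)]
    exact h 0 le_rfl
  · intro h S hS
    rw [div_lt_iff₀ (hDpos S hS)]
    have h0 : P * ω^2 * M₀^2 * x * (r + x)⁻¹^2 <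
        τ * (R + ω^2 * (r + x)⁻¹ * e^2 * (I₀^2 / d₀^6 + 0)) := key.mpr h
    have hmono : R + ω^2 * (r + x)⁻¹ * e^2 * (I₀^2 / d₀^6 + 0) ≤
        R + ω^2 * (r + x)⁻¹ * e^2 * (I₀^2 / d₀^6 + S) := by
      nlinarith [mul_nonneg hcoef.le hS]
    nlinarith [mul_le_mul_of_nonneg_left hmono hτ.le]
end
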